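/- arXiv:1908.10668 — 2 statements merged into one kernel-verified Lean document; each statement's English description precedes it below -/
import Mathlib

section
/- Let G be a connected simple graph on a nonempty finite vertex set V, let T be a spanning tree of G, and let A₁ and A₂ be two gain matrices on G. If for every fundamental cycle w of G with respect to T the gain of w under A₁ equals the gain of w under A₂, then A₁ and A₂ have the same characteristic polynomial (in particular they are cospectral). -/
open SimpleGraph

/-- A gain matrix on a simple graph `G`: unimodular entries on edges, zero elsewhere,
and `A j i` is the complex conjugate of `A i j`. -/
def IsGainMatrix {V : Type*} (G : SimpleGraph V) (A : Matrix V V ℂ) : Prop :=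
  (∀ i j, G.Adj i j → ‖A i j‖ = 1) ∧ (∀ i j, ¬ G.Adj i j → A i j = 0) ∧
    (∀ i j, A j i = (starRingEnd ℂ) (A i j))

/-- A gain matrix is Hermitian. -/
theorem IsGainMatrix.isHermitian {V : Type*} {G : SimpleGraph V} {A : Matrix V V ℂ}
    (h : IsGainMatrix G A) : A.IsHermitian := by
  ext i j
  rw [Matrix.conjTranspose_apply, h.2.2 j i]
  rfl

/-- The gain of a walk: the product of the entries of `A` along the darts of the walk. -/
noncomputable def gainOfWalk {V : Type*} {G : SimpleGraph V} (A : Matrix V V ℂ)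
    {u v : V} (w : G.Walk u v) : ℂ :=
  (w.darts.map fun d => A d.fst d.snd).prod

/-- Switching equivalence of two gain matrices. -/
def SwitchingEquiv {V : Type*} (A₁ A₂ : Matrix V V ℂ) : Prop :=
  ∃ ζ : V → ℂ, (∀ v, ‖ζ v‖ = 1) ∧ ∀ i j, A₂ i j = (ζ i)⁻¹ * A₁ i j * ζ j

/-- The largest eigenvalue of a Hermitian matrix. -/
noncomputable def lambdaMax {V : Type*} [Fintype V] [DecidableEq V] {𝕜 : Type*} [RCLike 𝕜]
    (A : Matrix V V 𝕜) (hA : A.IsHermitian) : ℝ :=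
  ⨆ i, hA.eigenvalues i

/-- The spectral radius of a Hermitian matrix: the largest absolute value of an eigenvalue. -/
noncomputable def specRad {V : Type*} [Fintype V] [DecidableEq V] {𝕜 : Type*} [RCLike 𝕜]
    (A : Matrix V V 𝕜) (hA : A.IsHermitian) : ℝ :=
  ⨆ i, |hA.eigenvalues i|

section auxGain

variable {V : Type*} {G T : SimpleGraph V} {A : Matrix V V ℂ}

@[simp] lemma gain_nil {u : V} : gainOfWalk A (SimpleGraph.Walk.nil : G.Walk u u) = 1 := by
  simp [gainOfWalk]

@[simp] lemma gain_cons {u x v : V} (h : G.Adj u x) (q : G.Walk x v) :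
    gainOfWalk A (SimpleGraph.Walk.cons h q) = A u x * gainOfWalk A q := by
  simp [gainOfWalk]

lemma gain_append {u v w : V} (p : G.Walk u v) (q : G.Walk v w) :
    gainOfWalk A (p.append q) = gainOfWalk A p * gainOfWalk A q := by
  simp [gainOfWalk, SimpleGraph.Walk.darts_append]

lemma gain_concat {u v w : V} (p : G.Walk u v) (h : G.Adj v w) :
    gainOfWalk A (p.concat h) = gainOfWalk A p * A v w := by
  simp [gainOfWalk, SimpleGraph.Walk.darts_concat]

lemma gain_mapLe (hle : T ≤ G) {u v : V} (q : T.Walk u v) :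
    gainOfWalk A (q.mapLe hle) = gainOfWalk A q := by
  simp only [gainOfWalk, SimpleGraph.Walk.mapLe, SimpleGraph.Walk.darts_map, List.map_map]
  congr 1

lemma gain_ne_zero (h : IsGainMatrix G A) (hle : T ≤ G) {u v : V} (p : T.Walk u v) :
    gainOfWalk A p ≠ 0 := by
  induction p with
  | nil => simp
  | cons ha q ih =>
    simp only [gain_cons, mul_ne_zero_iff]
    exact ⟨fun h0 => by simpa [h0] using h.1 _ _ (hle ha), ih⟩

lemma gain_unimod (h : IsGainMatrix G A) (hle : T ≤ G) {u v : V} (p : T.Walk u v) :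
    ‖gainOfWalk A p‖ = 1 := by
  induction p with
  | nil => simp
  | cons ha q ih => simp [gain_cons, norm_mul, ih, h.1 _ _ (hle ha)]

lemma entry_mul_entry (h : IsGainMatrix G A) {i j : V} (hij : G.Adj i j) :
    A j i * A i j = 1 := by
  have h1 := h.1 i j hij
  rw [h.2.2 i j, mul_comm, Complex.mul_conj, Complex.normSq_eq_norm_sq, h1]
  norm_num

lemma concat_isPath' {u v w : V} {p : G.Walk u v} (hp : p.IsPath) (hw : w ∉ p.support)
    (h : G.Adj v w) : (p.concat h).IsPath := by
  rw [SimpleGraph.Walk.isPath_def, SimpleGraph.Walk.support_concat]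
  simp [List.nodup_append, hp.support_nodup, hw]
  exact fun a ha hae => hw (hae ▸ ha)

open Matrix Polynomial in
lemma charpoly_similar' {n R : Type*} [Fintype n] [DecidableEq n] [CommRing R]
    (P : (Matrix n n R)ˣ) (M : Matrix n n R) :
    ((P : Matrix n n R) * M * (↑P⁻¹ : Matrix n n R)).charpoly = M.charpoly := by
  let f : Matrix n n R →+* Matrix n n R[X] := (Polynomial.C : R →+* R[X]).mapMatrix
  have hmul : ∀ X Y : Matrix n n R, f (X * Y) = f X * f Y := fun X Y => _root_.map_mul f X Y
  have hC : charmatrix ((P : Matrix n n R) * M * (↑P⁻¹ : Matrix n n R))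
      = f (P : Matrix n n R) * charmatrix M * f (↑P⁻¹ : Matrix n n R) := by
    have hcomm := Matrix.scalar_commute (X : R[X]) (fun r => Commute.all _ r)
      (f (P : Matrix n n R))
    rw [charmatrix, charmatrix, mul_sub, sub_mul]
    congr 1
    · rw [← hcomm.eq, mul_assoc, ← hmul, Units.mul_inv, _root_.map_one f, mul_one]
    · show _ = f _ * f _ * f _
      rw [← hmul, ← hmul]
  have hdet : (f (P : Matrix n n R)).det * (f (↑P⁻¹ : Matrix n n R)).det = 1 := by
    rw [← det_mul, ← hmul, Units.mul_inv, _root_.map_one f, det_one]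
  rw [Matrix.charpoly, Matrix.charpoly, hC, det_mul, det_mul]
  rw [mul_comm, ← mul_assoc, mul_comm ((f (↑P⁻¹ : Matrix n n R)).det), hdet, one_mul]

end auxGain

/-- If two gain matrices agree on the gains of all fundamental cycles of `G` with respect
to a spanning tree `T`, then they have the same characteristic polynomial. -/
theorem stmt_2 {V : Type*} [Fintype V] [Nonempty V] [DecidableEq V]
    (G : SimpleGraph V) (hG : G.Connected)
    (T : SimpleGraph V) (hTG : T ≤ G) (hT : T.IsTree)
    (A₁ A₂ : Matrix V V ℂ) (h₁ : IsGainMatrix G A₁) (h₂ : IsGainMatrix G A₂)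
    (hfund : ∀ (v : V) (w : G.Walk v v), w.IsCycle →
      (∃! e, e ∈ w.edges ∧ e ∉ T.edgeSet) → gainOfWalk A₁ w = gainOfWalk A₂ w) :
    A₁.charpoly = A₂.charpoly := by
  classical
  obtain ⟨root⟩ := (inferInstance : Nonempty V)
  choose p hp hup using hT.existsUnique_path
  -- the key lemma about tree edges
  have key : ∀ (A : Matrix V V ℂ), IsGainMatrix G A → ∀ {i j : V}, T.Adj i j →
      gainOfWalk A (p root j) = gainOfWalk A (p root i) * A i j := by
    intro A hA i j hij
    by_cases hj : j ∈ (p root i).support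
    · have hq1 : (p root i).takeUntil j hj = p root j :=
        hup root j _ ((hp root i).takeUntil hj)
      have e1 : (p root i).dropUntil j hj = p j i :=
        hup j i _ ((hp root i).dropUntil hj)
      have e2 : (SimpleGraph.Walk.cons hij.symm SimpleGraph.Walk.nil : T.Walk j i) = p j i :=
        hup j i _ (by simp [hij.ne'])
      have hsp : gainOfWalk A (p root i) = gainOfWalk A (p root j) * A j i := by
        conv_lhs => rw [← (p root i).take_spec hj]
        rw [gain_append, hq1, e1, ← e2, gain_cons, gain_nil, mul_one]
      rw [hsp, mul_assoc, entry_mul_entry hA (hTG hij), mul_one]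
    · have hcp : (p root i).concat hij = p root j :=
        hup root j _ (concat_isPath' (hp root i) hj hij)
      rw [← hcp, gain_concat]
  set ζ : V → ℂ := fun v => gainOfWalk A₂ (p root v) * (gainOfWalk A₁ (p root v))⁻¹ with hζdef
  have hg1ne : ∀ {u v : V} (q : T.Walk u v), gainOfWalk A₁ q ≠ 0 :=
    fun q => gain_ne_zero h₁ hTG q
  have hg2ne : ∀ {u v : V} (q : T.Walk u v), gainOfWalk A₂ q ≠ 0 :=
    fun q => gain_ne_zero h₂ hTG q
  have hζne : ∀ v, ζ v ≠ 0 := fun v =>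
    mul_ne_zero (hg2ne _) (inv_ne_zero (hg1ne _))
  have hA1ne : ∀ {i j : V}, G.Adj i j → A₁ i j ≠ 0 := by
    intro i j hij h0
    simpa [h0] using h₁.1 i j hij
  have hE : ∀ {i j : V}, T.Adj i j → A₁ i j * ζ j = ζ i * A₂ i j := by
    intro i j hij
    have k1 := key A₁ h₁ hij
    have k2 := key A₂ h₂ hij
    simp only [hζdef]
    rw [k1, k2]
    have n1 : gainOfWalk A₁ (p root i) ≠ 0 := hg1ne _
    have n2 : A₁ i j ≠ 0 := hA1ne (hTG hij)
    field_simp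
  have hC : ∀ {u v : V} (q : T.Walk u v),
      gainOfWalk A₁ q * ζ v = ζ u * gainOfWalk A₂ q := by
    intro u v q
    induction q with
    | nil => simp [mul_comm]
    | cons ha q ih =>
      rw [gain_cons, gain_cons, mul_assoc, ih, ← mul_assoc, hE ha, mul_assoc]
  have hmain : ∀ i j, A₂ i j = (ζ i)⁻¹ * A₁ i j * ζ j := by
    intro i j
    by_cases hij : G.Adj i j
    · by_cases hT' : T.Adj i j
      · have h' := hE hT'
        rw [mul_assoc, h', ← mul_assoc, inv_mul_cancel₀ (hζne i), one_mul]
      · have hne : s(i, j) ∉ T.edgeSet := fun h => hT' (T.mem_edgeSet.mp h)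
        have hqpath : ((p j i).mapLe hTG).IsPath := ((p j i).mapLe_isPath hTG).mpr (hp j i)
        have hedges : ∀ e ∈ ((p j i).mapLe hTG).edges, e ∈ T.edgeSet := by
          intro e he
          have hEq : ((p j i).mapLe hTG).edges = (p j i).edges := by
            have hid : ⇑(SimpleGraph.Hom.ofLE hTG) = id := rfl
            rw [SimpleGraph.Walk.mapLe, SimpleGraph.Walk.edges_map, hid, Sym2.map_id,
              List.map_id]
          rw [hEq] at he
          exact (p j i).edges_subset_edgeSet he
        have hcyc : (SimpleGraph.Walk.cons hij ((p j i).mapLe hTG)).IsCycle := by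
          rw [SimpleGraph.Walk.cons_isCycle_iff]
          exact ⟨hqpath, fun h => hne (hedges _ h)⟩
        have huniq : ∃! e, e ∈ (SimpleGraph.Walk.cons hij ((p j i).mapLe hTG)).edges ∧
            e ∉ T.edgeSet := by
          refine ⟨s(i, j), ⟨by simp, hne⟩, ?_⟩
          rintro e ⟨he, heT⟩
          simp only [SimpleGraph.Walk.edges_cons, List.mem_cons] at he
          rcases he with rfl | he
          · rfl
          · exact absurd (hedges _ he) heT
        have hg := hfund i _ hcyc huniq
        rw [gain_cons, gain_cons, gain_mapLe hTG, gain_mapLe hTG] at hg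
        have hc2 := hC (p j i)
        have hgoal : (A₂ i j * ζ i) * gainOfWalk A₂ (p j i)
            = (A₁ i j * ζ j) * gainOfWalk A₂ (p j i) := by
          calc (A₂ i j * ζ i) * gainOfWalk A₂ (p j i)
              = (A₂ i j * gainOfWalk A₂ (p j i)) * ζ i := by ring
            _ = (A₁ i j * gainOfWalk A₁ (p j i)) * ζ i := by rw [hg]
            _ = A₁ i j * (gainOfWalk A₁ (p j i) * ζ i) := by ring
            _ = A₁ i j * (ζ j * gainOfWalk A₂ (p j i)) := by rw [hc2]
            _ = (A₁ i j * ζ j) * gainOfWalk A₂ (p j i) := by ring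
        have h' := mul_right_cancel₀ (hg2ne (p j i)) hgoal
        rw [mul_assoc, ← h', mul_comm (A₂ i j) (ζ i), ← mul_assoc,
          inv_mul_cancel₀ (hζne i), one_mul]
    · simp [h₁.2.1 i j hij, h₂.2.1 i j hij]
  have hinv1 : (Matrix.diagonal fun v => (ζ v)⁻¹) * Matrix.diagonal ζ = 1 := by
    rw [Matrix.diagonal_mul_diagonal]
    have : (fun v => (ζ v)⁻¹ * ζ v) = fun _ => (1 : ℂ) :=
      funext fun v => inv_mul_cancel₀ (hζne v)
    rw [this, Matrix.diagonal_one]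
  have hinv2 : Matrix.diagonal ζ * (Matrix.diagonal fun v => (ζ v)⁻¹) = 1 := by
    rw [Matrix.diagonal_mul_diagonal]
    have : (fun v => ζ v * (ζ v)⁻¹) = fun _ => (1 : ℂ) :=
      funext fun v => mul_inv_cancel₀ (hζne v)
    rw [this, Matrix.diagonal_one]
  let U : (Matrix V V ℂ)ˣ := ⟨Matrix.diagonal fun v => (ζ v)⁻¹, Matrix.diagonal ζ, hinv1, hinv2⟩
  have hval : (U : Matrix V V ℂ) * A₁ * (↑U⁻¹ : Matrix V V ℂ) = A₂ := by
    show (Matrix.diagonal fun v => (ζ v)⁻¹) * A₁ * Matrix.diagonal ζ = A₂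
    ext i j
    rw [Matrix.mul_diagonal, Matrix.diagonal_mul, hmain i j]
  rw [← hval]
  exact (charpoly_similar' U A₁).symm
end

section
/- Let G be a connected simple graph on a nonempty finite vertex set V all of whose cycles are pairwise vertex disjoint, i.e., any two cycles of G with different edge sets have disjoint vertex supports. Then every gain matrix A on G is switching equivalent to a gain matrix B on G all of whose entries have nonnegative real part, i.e., 0 ≤ (B i j).re for all i, j. -/
set_option linter.unusedSectionVars false


open SimpleGraph

namespace GainAux

variable {V : Type*} [Fintype V] [DecidableEq V]

def dartsP {W : SimpleGraph V} {u v : V} (w : W.Walk u v) : List (V × V) :=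
  w.darts.map SimpleGraph.Dart.toProd

lemma dartsP_adj {W : SimpleGraph V} {u v : V} {w : W.Walk u v} {i j : V}
    (h : (i, j) ∈ dartsP w) : W.Adj i j := by
  obtain ⟨d, hd, he⟩ := List.mem_map.1 h
  have ha := d.adj
  rw [he] at ha
  exact ha

lemma dartsP_edges {W : SimpleGraph V} {u v : V} (w : W.Walk u v) :
    w.edges = (dartsP w).map fun q => s(q.1, q.2) := by
  simp only [Walk.edges, dartsP, List.map_map]
  rfl

variable (G T : SimpleGraph V)

noncomputable def tp (hT : T.IsTree) (u v : V) : T.Walk u v :=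
  (hT.existsUnique_path u v).choose

lemma tp_isPath (hT : T.IsTree) (u v : V) : (tp T hT u v).IsPath :=
  (hT.existsUnique_path u v).choose_spec.1

lemma tp_unique (hT : T.IsTree) {u v : V} (p : T.Walk u v) (hp : p.IsPath) :
    p = tp T hT u v :=
  (hT.existsUnique_path u v).choose_spec.2 p hp

def lt' (u v : V) : Prop := Fintype.equivFin V u < Fintype.equivFin V v

lemma lt'_trichot {u v : V} (h : u ≠ v) : lt' u v ∨ lt' v u := by
  rcases lt_or_gt_of_ne (fun he => h ((Fintype.equivFin V).injective he)) with h' | h'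
  · exact Or.inl h'
  · exact Or.inr h'

lemma lt'_asymm {u v : V} (h : lt' u v) : ¬ lt' v u := lt_asymm h

def Chord (x y : V) : Prop := G.Adj x y ∧ ¬ T.Adj x y ∧ lt' x y

variable (hle : T ≤ G) (hT : T.IsTree) (A : Matrix V V ℂ)
set_option linter.unusedSectionVars false

noncomputable def LL (x y : V) : List (V × V) := (x, y) :: dartsP (tp T hT y x)

noncomputable def KK {x y : V} (hxy : G.Adj x y) : G.Walk x x :=
  Walk.cons hxy ((tp T hT y x).mapLe hle)

lemma edges_mapLe {W W' : SimpleGraph V} (h : W ≤ W') {u v : V} (p : W.Walk u v) :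
    (p.mapLe h).edges = p.edges := by
  induction p with
  | nil => rfl
  | cons ha q ih => simp [Walk.map_cons, ih]

lemma KK_edges {x y : V} (hxy : G.Adj x y) :
    (KK G T hle hT hxy).edges = s(x, y) :: (tp T hT y x).edges := by
  rw [KK, Walk.edges_cons, edges_mapLe]

lemma KK_isCycle {x y : V} (hch : Chord G T x y) :
    (KK G T hle hT hch.1).IsCycle := by
  rw [KK, Walk.cons_isCycle_iff]
  refine ⟨(tp_isPath T hT y x).mapLe hle, fun hmem => ?_⟩
  rw [edges_mapLe] at hmem
  exact hch.2.1 ((tp T hT y x).adj_of_mem_edges hmem)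

lemma mem_LL_edges {x y i j : V} (hxy : G.Adj x y) (h : (i, j) ∈ LL T hT x y) :
    s(i, j) ∈ (KK G T hle hT hxy).edges := by
  rw [KK_edges]
  rcases List.mem_cons.1 h with h | h
  · rw [Prod.mk.injEq] at h
    rw [h.1, h.2]
    exact List.mem_cons_self
  · exact List.mem_cons_of_mem _ (by rw [dartsP_edges]; exact List.mem_map_of_mem h)

include hle in
lemma mem_LL_adj {x y i j : V} (hch : Chord G T x y) (h : (i, j) ∈ LL T hT x y) :
    G.Adj i j := by
  rcases List.mem_cons.1 h with h | h
  · rw [Prod.mk.injEq] at h; rw [h.1, h.2]; exact hch.1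
  · exact hle (dartsP_adj h)


include hle in
lemma chord_unique
    (hdisj : ∀ (u v : V) (w₁ : G.Walk u u) (w₂ : G.Walk v v), w₁.IsCycle → w₂.IsCycle →
      w₁.edges.toFinset ≠ w₂.edges.toFinset → ∀ x, x ∈ w₁.support → x ∉ w₂.support)
    {x y x' y' i j : V} (h1 : Chord G T x y) (h2 : Chord G T x' y')
    (m1 : s(i, j) ∈ (KK G T hle hT h1.1).edges) (m2 : s(i, j) ∈ (KK G T hle hT h2.1).edges) :
    x = x' ∧ y = y' := by
  have hi1 : i ∈ (KK G T hle hT h1.1).support :=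
    Walk.fst_mem_support_of_mem_edges _ m1
  have hi2 : i ∈ (KK G T hle hT h2.1).support :=
    Walk.fst_mem_support_of_mem_edges _ m2
  have hEF : (KK G T hle hT h1.1).edges.toFinset = (KK G T hle hT h2.1).edges.toFinset := by
    by_contra hne
    exact hdisj _ _ _ _ (KK_isCycle G T hle hT h1) (KK_isCycle G T hle hT h2) hne i hi1 hi2
  have hxy' : s(x', y') ∈ (KK G T hle hT h1.1).edges := by
    rw [← List.mem_toFinset, hEF, List.mem_toFinset, KK_edges]
    exact List.mem_cons_self
  rw [KK_edges] at hxy'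
  rcases List.mem_cons.1 hxy' with h | h
  · rw [Sym2.eq_iff] at h
    rcases h with ⟨rfl, rfl⟩ | ⟨rfl, rfl⟩
    · exact ⟨rfl, rfl⟩
    · exact absurd h2.2.2 (lt'_asymm h1.2.2)
  · exact absurd ((tp T hT y x).adj_of_mem_edges h) h2.2.1

include hle in
lemma LL_not_rev
    {x y i j : V} (hch : Chord G T x y) (h : (i, j) ∈ LL T hT x y)
    (h' : (j, i) ∈ LL T hT x y) : False := by
  have hned : (i : V) ≠ j := G.ne_of_adj (mem_LL_adj G T hle hT hch h)
  have hnd : ((KK G T hle hT hch.1).edges).Nodup :=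
    (KK_isCycle G T hle hT hch).isTrail.edges_nodup
  have hform : (KK G T hle hT hch.1).edges = (LL T hT x y).map fun q => s(q.1, q.2) := by
    rw [KK_edges, dartsP_edges]
    rfl
  rw [hform] at hnd
  have := List.inj_on_of_nodup_map hnd h h' (by rw [Sym2.eq_swap])
  rw [Prod.mk.injEq] at this
  exact hned this.1

noncomputable def gg (x y : V) : ℂ := ((LL T hT x y).map fun q => A q.1 q.2).prod

noncomputable def rr (x y : V) : ℂ :=
  Complex.exp ((((gg T hT A x y).arg / (LL T hT x y).length : ℝ) : ℂ) * Complex.I)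

lemma LL_length_ge {x y : V} (hch : Chord G T x y) : 2 ≤ (LL T hT x y).length := by
  have h1 : (tp T hT y x).length ≠ 0 := by
    intro h0
    exact G.ne_of_adj hch.1 (Walk.eq_of_length_eq_zero h0).symm
  have : (LL T hT x y).length = (tp T hT y x).length + 1 := by
    simp [LL, dartsP, Walk.length_darts]
  omega

lemma rr_norm (x y : V) : ‖rr T hT A x y‖ = 1 := by
  rw [rr, Complex.norm_exp_ofReal_mul_I]

lemma rr_re {x y : V} (hch : Chord G T x y) : 0 ≤ (rr T hT A x y).re := by
  rw [rr, Complex.exp_ofReal_mul_I_re]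
  set a := (gg T hT A x y).arg
  set n := (LL T hT x y).length
  have hn : (2 : ℝ) ≤ n := by exact_mod_cast LL_length_ge G T hT hch
  have hpos : (0 : ℝ) < n := by linarith
  apply Real.cos_nonneg_of_mem_Icc
  have habs : |a / n| ≤ Real.pi / 2 := by
    rw [abs_div, abs_of_pos hpos]
    calc |a| / (n : ℝ) ≤ Real.pi / n := by
          apply div_le_div_of_nonneg_right (Complex.abs_arg_le_pi _) hpos.le
      _ ≤ Real.pi / 2 :=
          div_le_div_of_nonneg_left Real.pi_pos.le (by norm_num) hn
  rw [abs_le] at habs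
  exact ⟨habs.1, habs.2⟩

attribute [local instance] Classical.propDecidable

noncomputable def cg (i j : V) : ℂ :=
  if h : ∃ q : V × V, Chord G T q.1 q.2 ∧ (i, j) ∈ LL T hT q.1 q.2 then
    rr T hT A h.choose.1 h.choose.2
  else if h' : ∃ q : V × V, Chord G T q.1 q.2 ∧ (j, i) ∈ LL T hT q.1 q.2 then
    (starRingEnd ℂ) (rr T hT A h'.choose.1 h'.choose.2)
  else 1

lemma cg_norm (i j : V) : ‖cg G T hT A i j‖ = 1 := by
  rw [cg]
  split_ifs with h h'
  · exact rr_norm T hT A _ _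
  · rw [Complex.norm_conj]; exact rr_norm T hT A _ _
  · simp

lemma cg_re (i j : V) : 0 ≤ (cg G T hT A i j).re := by
  rw [cg]
  split_ifs with h h'
  · exact rr_re G T hT A h.choose_spec.1
  · rw [Complex.conj_re]; exact rr_re G T hT A h'.choose_spec.1
  · simp

include hle in
lemma cg_conj
    (hdisj : ∀ (u v : V) (w₁ : G.Walk u u) (w₂ : G.Walk v v), w₁.IsCycle → w₂.IsCycle →
      w₁.edges.toFinset ≠ w₂.edges.toFinset → ∀ x, x ∈ w₁.support → x ∉ w₂.support)
    (i j : V) : cg G T hT A j i = (starRingEnd ℂ) (cg G T hT A i j) := by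
  rw [cg, cg]
  by_cases h : ∃ q : V × V, Chord G T q.1 q.2 ∧ (i, j) ∈ LL T hT q.1 q.2
  · rw [dif_pos h]
    have hji : ¬ ∃ q : V × V, Chord G T q.1 q.2 ∧ (j, i) ∈ LL T hT q.1 q.2 := by
      rintro ⟨q, hq, hm⟩
      obtain ⟨hx, hy⟩ := chord_unique G T hle hT hdisj hq h.choose_spec.1
        (by rw [Sym2.eq_swap]; exact mem_LL_edges G T hle hT hq.1 hm)
        (mem_LL_edges G T hle hT h.choose_spec.1.1 h.choose_spec.2)
      exact LL_not_rev G T hle hT hq hm (by rw [hx, hy]; exact h.choose_spec.2)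
    rw [dif_neg hji, dif_pos h]
  · rw [dif_neg h]
    by_cases h' : ∃ q : V × V, Chord G T q.1 q.2 ∧ (j, i) ∈ LL T hT q.1 q.2
    · rw [dif_pos h', dif_neg h, dif_pos h', Complex.conj_conj]
    · rw [dif_neg h', dif_neg h, dif_neg h']
      simp

include hle in
lemma cg_dart
    (hdisj : ∀ (u v : V) (w₁ : G.Walk u u) (w₂ : G.Walk v v), w₁.IsCycle → w₂.IsCycle →
      w₁.edges.toFinset ≠ w₂.edges.toFinset → ∀ x, x ∈ w₁.support → x ∉ w₂.support)
    {x y i j : V} (hch : Chord G T x y) (h : (i, j) ∈ dartsP (tp T hT y x)) :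
    cg G T hT A i j = rr T hT A x y := by
  have hmem : (i, j) ∈ LL T hT x y := List.mem_cons_of_mem _ h
  have hex : ∃ q : V × V, Chord G T q.1 q.2 ∧ (i, j) ∈ LL T hT q.1 q.2 := ⟨(x, y), hch, hmem⟩
  rw [cg, dif_pos hex]
  obtain ⟨hx, hy⟩ := chord_unique G T hle hT hdisj hex.choose_spec.1 hch
    (mem_LL_edges G T hle hT hex.choose_spec.1.1 hex.choose_spec.2)
    (mem_LL_edges G T hle hT hch.1 hmem)
  rw [hx, hy]

noncomputable def ph (i j : V) : ℂ := cg G T hT A i j * A j i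

noncomputable def Ph {u v : V} (w : T.Walk u v) : ℂ :=
  ((dartsP w).map fun q => ph G T hT A q.1 q.2).prod

noncomputable def ze (r v : V) : ℂ := Ph G T hT A (tp T hT r v)

lemma unim_inv_eq_conj {z : ℂ} (h : ‖z‖ = 1) : z⁻¹ = (starRingEnd ℂ) z := by
  have : z * (starRingEnd ℂ) z = 1 := by
    rw [Complex.mul_conj]
    norm_cast
    rw [Complex.normSq_eq_norm_sq, h]
    norm_num
  exact inv_eq_of_mul_eq_one_right this

lemma prod_norm_one {l : List ℂ} (h : ∀ z ∈ l, ‖z‖ = 1) : ‖l.prod‖ = 1 := by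
  induction l with
  | nil => simp
  | cons a t ih =>
    rw [List.prod_cons, norm_mul, h a List.mem_cons_self,
      ih fun z hz => h z (List.mem_cons_of_mem _ hz), one_mul]

include hle in
lemma ph_norm (hA : IsGainMatrix G A) {u v : V} (h : T.Adj u v) :
    ‖ph G T hT A u v‖ = 1 := by
  rw [ph, norm_mul, cg_norm, hA.1 v u (hle h).symm, one_mul]

include hle in
lemma Ph_norm (hA : IsGainMatrix G A) {u v : V} (w : T.Walk u v) :
    ‖Ph G T hT A w‖ = 1 := by
  apply prod_norm_one
  intro z hz
  obtain ⟨q, hq, rfl⟩ := List.mem_map.1 hz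
  exact ph_norm G T hle hT A hA (dartsP_adj hq)

include hle in
lemma ze_norm (hA : IsGainMatrix G A) (r v : V) : ‖ze G T hT A r v‖ = 1 :=
  Ph_norm G T hle hT A hA _

include hle in
lemma ph_inv (hA : IsGainMatrix G A)
    (hdisj : ∀ (u v : V) (w₁ : G.Walk u u) (w₂ : G.Walk v v), w₁.IsCycle → w₂.IsCycle →
      w₁.edges.toFinset ≠ w₂.edges.toFinset → ∀ x, x ∈ w₁.support → x ∉ w₂.support)
    {u v : V} (h : T.Adj u v) : (ph G T hT A v u)⁻¹ = ph G T hT A u v := by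
  rw [unim_inv_eq_conj (ph_norm G T hle hT A hA h.symm), ph, map_mul,
    ← cg_conj G T hle hT A hdisj, ← hA.2.2, ph]

lemma Ph_append {u v w : V} (p : T.Walk u v) (q : T.Walk v w) :
    Ph G T hT A (p.append q) = Ph G T hT A p * Ph G T hT A q := by
  rw [Ph, Ph, Ph, dartsP, Walk.darts_append, List.map_append, List.map_append, List.prod_append]
  rfl

lemma Ph_cons {u v w : V} (h : T.Adj u v) (q : T.Walk v w) :
    Ph G T hT A (Walk.cons h q) = ph G T hT A u v * Ph G T hT A q := by
  simp [Ph, dartsP, Walk.darts_cons]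

lemma Ph_single {u v : V} (h : T.Adj u v) :
    Ph G T hT A (Walk.cons h Walk.nil) = ph G T hT A u v := by
  simp [Ph, dartsP]

include hle in
lemma ze_adj (hA : IsGainMatrix G A)
    (hdisj : ∀ (u v : V) (w₁ : G.Walk u u) (w₂ : G.Walk v v), w₁.IsCycle → w₂.IsCycle →
      w₁.edges.toFinset ≠ w₂.edges.toFinset → ∀ x, x ∈ w₁.support → x ∉ w₂.support)
    (r : V) {u v : V} (h : T.Adj u v) :
    ze G T hT A r v = ze G T hT A r u * ph G T hT A u v := by
  by_cases hv : v ∈ (tp T hT r u).support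
  · have h1 : (tp T hT r u).takeUntil v hv = tp T hT r v :=
      tp_unique T hT _ ((tp_isPath T hT r u).takeUntil hv)
    have h2 : (tp T hT r u).dropUntil v hv = Walk.cons h.symm Walk.nil := by
      rw [tp_unique T hT ((tp T hT r u).dropUntil v hv) ((tp_isPath T hT r u).dropUntil hv)]
      symm
      apply tp_unique
      rw [Walk.cons_isPath_iff]
      exact ⟨Walk.IsPath.nil, by simpa using (T.ne_of_adj h).symm⟩
    have h3 : ze G T hT A r u = ze G T hT A r v * ph G T hT A v u := by
      rw [ze, ← Walk.take_spec (tp T hT r u) hv, Ph_append, h1, h2, Ph_single]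
      rfl
    have hnz : ph G T hT A v u ≠ 0 := by
      intro h0
      have := ph_norm G T hle hT A hA h.symm
      rw [h0] at this
      simp at this
    rw [h3, mul_assoc, ← ph_inv G T hle hT A hA hdisj h, mul_inv_cancel₀ hnz, mul_one]
  · have hq : ((tp T hT r u).concat h).IsPath := by
      rw [Walk.isPath_def, Walk.support_concat]
      rw [List.nodup_append]
      refine ⟨(tp_isPath T hT r u).support_nodup, List.nodup_singleton v, ?_⟩
      intro a ha b hb hab
      rw [List.mem_singleton] at hb
      subst hb
      subst hab
      exact hv ha
    have h1 : (tp T hT r u).concat h = tp T hT r v := tp_unique T hT _ hq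
    rw [ze, ← h1, Walk.concat_eq_append, Ph_append, Ph_single]
    rfl

include hle in
lemma ze_walk (hA : IsGainMatrix G A)
    (hdisj : ∀ (u v : V) (w₁ : G.Walk u u) (w₂ : G.Walk v v), w₁.IsCycle → w₂.IsCycle →
      w₁.edges.toFinset ≠ w₂.edges.toFinset → ∀ x, x ∈ w₁.support → x ∉ w₂.support)
    (r : V) {u v : V} (w : T.Walk u v) :
    ze G T hT A r v = ze G T hT A r u * Ph G T hT A w := by
  induction w with
  | nil => simp [Ph, dartsP]
  | cons hadj q ih =>
    rw [Ph_cons, ih, ze_adj G T hle hT A hA hdisj r hadj, mul_assoc]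

lemma prod_map_mul'' {α : Type*} (l : List α) (f g : α → ℂ) :
    (l.map fun x => f x * g x).prod = (l.map f).prod * (l.map g).prod := by
  induction l with
  | nil => simp
  | cons a t ih => simp only [List.map_cons, List.prod_cons, ih]; ring

lemma prod_map_const' {α : Type*} (l : List α) (c : ℂ) :
    (l.map fun _ => c).prod = c ^ l.length := by
  induction l with
  | nil => simp
  | cons a t ih => simp only [List.map_cons, List.prod_cons, ih, List.length_cons, pow_succ]; ring

include hle in
lemma tree_val (hA : IsGainMatrix G A)
    (hdisj : ∀ (u v : V) (w₁ : G.Walk u u) (w₂ : G.Walk v v), w₁.IsCycle → w₂.IsCycle →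
      w₁.edges.toFinset ≠ w₂.edges.toFinset → ∀ x, x ∈ w₁.support → x ∉ w₂.support)
    (r : V) {u v : V} (h : T.Adj u v) :
    (ze G T hT A r u)⁻¹ * A u v * ze G T hT A r v = cg G T hT A u v := by
  have hz : ze G T hT A r u ≠ 0 := by
    intro h0
    have := ze_norm G T hle hT A hA r u
    rw [h0] at this
    simp at this
  have h1 : A u v * A v u = 1 := by
    rw [hA.2.2 u v, Complex.mul_conj]
    norm_cast
    rw [Complex.normSq_eq_norm_sq, hA.1 u v (hle h)]
    norm_num
  rw [ze_adj G T hle hT A hA hdisj r h, ph]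
  calc (ze G T hT A r u)⁻¹ * A u v * (ze G T hT A r u * (cg G T hT A u v * A v u))
      = cg G T hT A u v * ((A u v * A v u) * ((ze G T hT A r u)⁻¹ * ze G T hT A r u)) := by
        ring
    _ = cg G T hT A u v := by rw [h1, inv_mul_cancel₀ hz]; ring

include hle in
lemma chord_val (hA : IsGainMatrix G A)
    (hdisj : ∀ (u v : V) (w₁ : G.Walk u u) (w₂ : G.Walk v v), w₁.IsCycle → w₂.IsCycle →
      w₁.edges.toFinset ≠ w₂.edges.toFinset → ∀ x, x ∈ w₁.support → x ∉ w₂.support)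
    (r : V) {x y : V} (hch : Chord G T x y) :
    (ze G T hT A r x)⁻¹ * A x y * ze G T hT A r y = rr T hT A x y := by
  set p := tp T hT y x with hp
  set m := p.length with hm
  set Gp := ((dartsP p).map fun q => A q.1 q.2).prod with hGp
  have hw : ze G T hT A r x = ze G T hT A r y * Ph G T hT A p :=
    ze_walk G T hle hT A hA hdisj r p
  have hGnorm : ‖Gp‖ = 1 := by
    apply prod_norm_one
    intro z hz
    obtain ⟨q, hq, rfl⟩ := List.mem_map.1 hz
    exact hA.1 _ _ (hle (dartsP_adj hq))
  have hgg : gg T hT A x y = A x y * Gp := by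
    rw [gg, LL, List.map_cons, List.prod_cons]
  have hggn : ‖gg T hT A x y‖ = 1 := by
    rw [hgg, norm_mul, hA.1 x y hch.1, hGnorm, one_mul]
  have hlen : (dartsP p).length = m := by
    rw [dartsP, List.length_map, Walk.length_darts]
  have hPh : Ph G T hT A p = rr T hT A x y ^ m * (starRingEnd ℂ) Gp := by
    rw [Ph]
    have h1 : ((dartsP p).map fun q => ph G T hT A q.1 q.2)
        = (dartsP p).map fun q => rr T hT A x y * A q.2 q.1 := by
      apply List.map_congr_left
      rintro ⟨a, b⟩ hq
      rw [ph, cg_dart G T hle hT A hdisj hch hq]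
    have h2 : ((dartsP p).map fun q => A q.2 q.1)
        = (dartsP p).map fun q => (starRingEnd ℂ) (A q.1 q.2) := by
      apply List.map_congr_left
      rintro ⟨a, b⟩ _
      exact hA.2.2 a b
    rw [h1, prod_map_mul'', prod_map_const', hlen, h2]
    congr 1
    rw [hGp, map_list_prod (starRingEnd ℂ), List.map_map]
    rfl
  have hzy : ze G T hT A r y ≠ 0 := by
    intro h0
    have := ze_norm G T hle hT A hA r y
    rw [h0] at this
    simp at this
  have key : (ze G T hT A r x)⁻¹ * A x y * ze G T hT A r y
      = (Ph G T hT A p)⁻¹ * A x y := by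
    have h3 : (ze G T hT A r y * Ph G T hT A p)⁻¹ * A x y * ze G T hT A r y
        = (Ph G T hT A p)⁻¹ * A x y * ((ze G T hT A r y)⁻¹ * ze G T hT A r y) := by
      rw [mul_inv]; ring
    rw [hw, h3, inv_mul_cancel₀ hzy, mul_one]
  have hGc : ‖(starRingEnd ℂ) Gp‖ = 1 := by
    rw [Complex.norm_conj]
    exact hGnorm
  have hcinv : ((starRingEnd ℂ) Gp)⁻¹ = Gp := by
    rw [unim_inv_eq_conj hGc]
    simp
  rw [key, hPh, mul_inv, hcinv, mul_assoc]
  have hgg' : Gp * A x y = gg T hT A x y := by rw [hgg]; ring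
  rw [hgg']
  set nn := (LL T hT x y).length with hnn
  have hnm : nn = m + 1 := by
    rw [hnn, LL, List.length_cons, hlen]
  set a := (gg T hT A x y).arg with ha
  have hgge : gg T hT A x y = Complex.exp ((a : ℂ) * Complex.I) := by
    conv_lhs => rw [← Complex.norm_mul_exp_arg_mul_I (gg T hT A x y)]
    have : ((‖gg T hT A x y‖ : ℝ) : ℂ) = 1 := by
      rw [hggn]
      norm_num
    rw [this, one_mul]
  have hrr : rr T hT A x y = Complex.exp (((a / nn : ℝ) : ℂ) * Complex.I) := rfl
  rw [hgge, hrr, ← Complex.exp_nat_mul, ← Complex.exp_neg, ← Complex.exp_add]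
  congr 1
  rw [hnm]
  push_cast
  have hne : ((m : ℂ) + 1) ≠ 0 := Nat.cast_add_one_ne_zero m
  field_simp
  ring

end GainAux


lemma reach_del {V : Type*} {G : SimpleGraph V} {v w : V}
    (hr : (G \ fromEdgeSet {s(v, w)}).Reachable v w) :
    ∀ {a b : V}, G.Reachable a b → (G \ fromEdgeSet {s(v, w)}).Reachable a b := by
  intro a b ⟨p⟩
  induction p with
  | nil => rfl
  | cons h q ih =>
    rename_i x y z
    refine Reachable.trans ?_ ih
    by_cases he : s(x, y) = s(v, w)
    · rw [Sym2.eq_iff] at he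
      rcases he with ⟨rfl, rfl⟩ | ⟨rfl, rfl⟩
      · exact hr
      · exact hr.symm
    · exact Adj.reachable (by simp [he, h, G.ne_of_adj h])

lemma exists_spanning_tree {V : Type*} [Fintype V] (G : SimpleGraph V) (hG : G.Connected) :
    ∃ T ≤ G, T.IsTree := by
  classical
  obtain ⟨n, hn⟩ : ∃ n, G.edgeSet.ncard = n := ⟨_, rfl⟩
  induction n using Nat.strong_induction_on generalizing G with
  | _ n ih =>
    by_cases hac : G.IsAcyclic
    · exact ⟨G, le_rfl, ⟨hG, hac⟩⟩
    · rw [isAcyclic_iff_forall_adj_isBridge] at hac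
      push_neg at hac
      obtain ⟨v, w, hadj, hbr⟩ := hac
      rw [isBridge_iff] at hbr
      push_neg at hbr
      have hr : (G \ fromEdgeSet {s(v, w)}).Reachable v w := hbr
      set G' := G \ fromEdgeSet {s(v, w)} with hG'
      have hle : G' ≤ G := sdiff_le
      have hconn : G'.Connected := by
        have := hG.nonempty
        exact ⟨fun a b => reach_del hr (hG.preconnected a b)⟩
      have hedge : G'.edgeSet = G.edgeSet \ {s(v, w)} := by
        rw [hG', edgeSet_sdiff, edgeSet_fromEdgeSet, edgeSet_sdiff_sdiff_isDiag]
      have hlt : G'.edgeSet.ncard < n := by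
        rw [← hn, hedge]
        exact Set.ncard_diff_singleton_lt_of_mem hadj (Set.toFinite _)
      obtain ⟨T, hT1, hT2⟩ := ih _ hlt G' hconn rfl
      exact ⟨T, hT1.trans hle, hT2⟩

/-- If all cycles of a connected graph `G` are pairwise vertex disjoint, then every gain
matrix on `G` is switching equivalent to a gain matrix whose entries all have nonnegative
real part. -/
theorem stmt_7 {V : Type*} [Fintype V] [Nonempty V] [DecidableEq V]
    (G : SimpleGraph V) (hG : G.Connected)
    (hdisj : ∀ (u v : V) (w₁ : G.Walk u u) (w₂ : G.Walk v v), w₁.IsCycle → w₂.IsCycle →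
      w₁.edges.toFinset ≠ w₂.edges.toFinset → ∀ x, x ∈ w₁.support → x ∉ w₂.support)
    (A : Matrix V V ℂ) (hA : IsGainMatrix G A) :
    ∃ B : Matrix V V ℂ, IsGainMatrix G B ∧ SwitchingEquiv A B ∧
      ∀ i j, 0 ≤ (B i j).re := by
  obtain ⟨T, hle, hT⟩ := exists_spanning_tree G hG
  set r := Classical.arbitrary V with hr
  set ζ := GainAux.ze G T hT A r with hζ
  have hζn : ∀ v, ‖ζ v‖ = 1 := fun v => GainAux.ze_norm G T hle hT A hA r v
  have hconj : ∀ v, (starRingEnd ℂ) (ζ v) = (ζ v)⁻¹ :=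
    fun v => (GainAux.unim_inv_eq_conj (hζn v)).symm
  have hsym : ∀ i j, (ζ j)⁻¹ * A j i * ζ i = (starRingEnd ℂ) ((ζ i)⁻¹ * A i j * ζ j) := by
    intro i j
    rw [map_mul, map_mul, map_inv₀, hconj i, hconj j, ← hA.2.2 i j, inv_inv]
    ring
  refine ⟨Matrix.of fun i j => (ζ i)⁻¹ * A i j * ζ j, ⟨?_, ?_, ?_⟩,
    ⟨ζ, hζn, fun i j => rfl⟩, ?_⟩
  · intro i j hadj
    simp only [Matrix.of_apply]
    rw [norm_mul, norm_mul, norm_inv, hζn i, hζn j, hA.1 i j hadj]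
    norm_num
  · intro i j hadj
    simp only [Matrix.of_apply]
    rw [hA.2.1 i j hadj]
    ring
  · intro i j
    simp only [Matrix.of_apply]
    exact hsym i j
  · intro i j
    simp only [Matrix.of_apply]
    by_cases hadj : G.Adj i j
    · by_cases ht : T.Adj i j
      · rw [GainAux.tree_val G T hle hT A hA hdisj r ht]
        exact GainAux.cg_re G T hT A i j
      · have hne := G.ne_of_adj hadj
        rcases GainAux.lt'_trichot hne with hlt | hlt
        · have hch : GainAux.Chord G T i j := ⟨hadj, ht, hlt⟩
          rw [GainAux.chord_val G T hle hT A hA hdisj r hch]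
          exact GainAux.rr_re G T hT A hch
        · have hch : GainAux.Chord G T j i := ⟨hadj.symm, fun h => ht h.symm, hlt⟩
          have h1 : (ζ j)⁻¹ * A j i * ζ i = GainAux.rr T hT A j i :=
            GainAux.chord_val G T hle hT A hA hdisj r hch
          have h2 : ((ζ i)⁻¹ * A i j * ζ j).re = ((ζ j)⁻¹ * A j i * ζ i).re := by
            rw [hsym i j, Complex.conj_re]
          rw [h2, h1]
          exact GainAux.rr_re G T hT A hch
    · rw [hA.2.1 i j hadj]
      simp
end
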